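/- arXiv:1508.03445 — 2 statements merged into one kernel-verified Lean document; each statement's English description precedes it below -/
import Mathlib

section
/- Let π be a permutation of {1,…,n} of the form π = 1π' with π' dominant, let r and c be the number of rows and columns occupied by L(π), and set m = r + c − |Ess(π)|. Then there exist a tree T on vertex set {1,…,m} and a linear map φ : ℝ^{2n} → ℝ^m such that φ(Φ(P(Y_π))) = P(T); moreover the affine dimension of P(T) equals m − 1 = r + c − |Ess(π)| − 1. (This expresses that the moment polytope Φ(P(Y_π)) can be degenerated onto the acyclic root polytope P(T(π)).) -/
open scoped BigOperators

/-- `π` is a permutation of `{1,…,n}` (extended to `ℕ` by fixing all other points). -/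
def IsPermOn (n : ℕ) (π : Equiv.Perm ℕ) : Prop :=
  ∀ i : ℕ, ¬(1 ≤ i ∧ i ≤ n) → π i = i

/-- The Rothe diagram `D(π) = {(π(j), i) : i < j, π(i) > π(j)}`. -/
def RD (π : Equiv.Perm ℕ) : Set (ℕ × ℕ) :=
  {p | ∃ i j : ℕ, i < j ∧ π j < π i ∧ p = (π j, i)}

/-- Two boxes are edge-adjacent: `|i−i'| + |j−j'| = 1`. -/
def AdjBox (p q : ℕ × ℕ) : Prop :=
  (p.1 = q.1 ∧ (p.2 = q.2 + 1 ∨ q.2 = p.2 + 1)) ∨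
  (p.2 = q.2 ∧ (p.1 = q.1 + 1 ∨ q.1 = p.1 + 1))

/-- The dominant piece `dom(π)`: the boxes of `D(π)` joined to `(1,1)` by a path of
edge-adjacent boxes of `D(π)` (empty if `(1,1) ∉ D(π)`). -/
def domPiece (π : Equiv.Perm ℕ) : Set (ℕ × ℕ) :=
  {q | (1, 1) ∈ RD π ∧
    Relation.ReflTransGen (fun a b => b ∈ RD π ∧ AdjBox a b) (1, 1) q}

/-- `NW(π)`: the boxes lying (weakly) northwest of some box of `D(π)`. -/
def NWset (π : Equiv.Perm ℕ) : Set (ℕ × ℕ) :=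
  {p | 1 ≤ p.1 ∧ 1 ≤ p.2 ∧ ∃ q ∈ RD π, p.1 ≤ q.1 ∧ p.2 ≤ q.2}

/-- `L(π) = NW(π) ∖ dom(π)`. -/
def Lset (π : Equiv.Perm ℕ) : Set (ℕ × ℕ) := NWset π \ domPiece π

/-- `L'(π) = L(π) ∖ D(π)`. -/
def L'set (π : Equiv.Perm ℕ) : Set (ℕ × ℕ) := Lset π \ RD π

/-- Fulton's essential set: the southeast corners of `D(π)`. -/
def EssSet (π : Equiv.Perm ℕ) : Set (ℕ × ℕ) :=
  {p | p ∈ RD π ∧ (p.1 + 1, p.2) ∉ RD π ∧ (p.1, p.2 + 1) ∉ RD π}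
/-- `π = 1π'` with `π'` dominant: `π(1) = 1` and `D(π)` is the Young diagram of the
nonempty partition `λ = (lam 1 ≥ … ≥ lam ℓ > 0)` with northwest-most box at `(2,2)`. -/
def DominantOne (π : Equiv.Perm ℕ) (ℓ : ℕ) (lam : ℕ → ℕ) : Prop :=
  π 1 = 1 ∧ 1 ≤ ℓ ∧
  (∀ i j : ℕ, 1 ≤ i → i ≤ j → j ≤ ℓ → lam j ≤ lam i) ∧
  (∀ i : ℕ, 1 ≤ i → i ≤ ℓ → 1 ≤ lam i) ∧
  RD π = {p | ∃ i j : ℕ, 1 ≤ i ∧ i ≤ ℓ ∧ 1 ≤ j ∧ j ≤ lam i ∧ p = (i + 1, j + 1)}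
/-- The vertex `e_i - e_{n+j} ∈ ℝ^{2n}` associated to the (1-indexed) box `(i,j)`. -/
def vtx (n : ℕ) (p : ℕ × ℕ) : Fin (2 * n) → ℝ :=
  fun t => (if (t : ℕ) = p.1 - 1 then 1 else 0) - (if (t : ℕ) = n + p.2 - 1 then 1 else 0)

/-- `A` occupies exactly the rows `1,…,r` and the columns `1,…,c`. -/
def Occupies (A : Set (ℕ × ℕ)) (r c : ℕ) : Prop :=
  (∀ p ∈ A, 1 ≤ p.1 ∧ p.1 ≤ r ∧ 1 ≤ p.2 ∧ p.2 ≤ c) ∧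
  (∀ i, 1 ≤ i → i ≤ r → ∃ j, (i, j) ∈ A) ∧
  (∀ j, 1 ≤ j → j ≤ c → ∃ i, (i, j) ∈ A)

/-- The vector `e_a - e_b ∈ ℝ^m`. -/
def evec (m : ℕ) (a b : Fin m) : Fin m → ℝ :=
  fun t => (if t = a then 1 else 0) - (if t = b then 1 else 0)

/-- The acyclic root polytope `P(T)` of a tree `T` on `{1,…,m}`: the convex hull of `0`
together with all positive roots `e_a - e_b` (`a < b`) lying in the cone spanned by the
edge vectors of `T`. -/
def rootPoly {m : ℕ} (T : SimpleGraph (Fin m)) : Set (Fin m → ℝ) :=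
  convexHull ℝ ({0} ∪
    {v : Fin m → ℝ | ∃ a b : Fin m, a < b ∧ v = evec m a b ∧
      ∃ cf : Fin m × Fin m → ℝ, (∀ e, 0 ≤ cf e) ∧
        (∀ e : Fin m × Fin m, ¬(e.1 < e.2 ∧ T.Adj e.1 e.2) → cf e = 0) ∧
        v = ∑ e : Fin m × Fin m, cf e • evec m e.1 e.2})

/-!
Here `D(π)` is the Young diagram of `λ` moved to `(2,2)`, so `dom(π) = ∅` and `L(π)` is the Young
diagram with rows `λ_1 + 1, λ_1 + 1, λ_2 + 1, …, λ_ℓ + 1`: `r = ℓ + 1`, `c = λ_1 + 1`, and the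
essential boxes correspond to the corners of `λ`, the rows `a` with `λ_a > λ_{a+1}`.

Send row `i` of `L(π)` to the vertex `i - 1`, a column whose bottom box ends its row to the vertex
of the row of that box, and each of the other `c - |Ess(π)|` columns to a new vertex; `φ` maps
`e_i - e_{n+j}` to the difference of the vertices of row `i` and column `j`. The tree `T` joins
every row vertex `x < ℓ` to the first corner below it and every new column vertex to the row
vertex of its bottom box.

For any relation `E`, `e_a - e_b` lies in the cone spanned by the `e_x - e_y` with `E x y` iff
`b` is `E`-reachable from `a`: cut along the set of vertices from which `b` is reachable. The
increasing paths of `T` are exactly the pairs (row, column) of boxes of `L(π)`, which gives the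
polytope, and the affine dimension is `m - 1` because `T` is connected.
-/

open Finset Relation

section RootCone

variable {m : ℕ}

/-- `e_t`, indexed by a natural number; it is the zero vector if `m ≤ t`. -/
def ind (m t : ℕ) : Fin m → ℝ := fun z => if (z : ℕ) = t then 1 else 0

lemma linearCombination_ind {M : Type*} [AddCommMonoid M] [Module ℝ M] {N : ℕ} (f : Fin N → M)
    {s : ℕ} (hs : s < N) : Fintype.linearCombination ℝ f (ind N s) = f ⟨s, hs⟩ := by
  have : ind N s = Pi.single ⟨s, hs⟩ 1 := by
    funext z
    simp [ind, Pi.single_apply, Fin.ext_iff]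
  rw [this, Fintype.linearCombination_apply_single, one_smul]

lemma evec_eq_ind_sub_ind (a b : Fin m) : evec m a b = ind m a - ind m b := by
  funext z
  simp [evec, ind, Fin.ext_iff]

lemma evec_self (a : Fin m) : evec m a a = 0 := by
  funext z
  simp [evec]

lemma evec_add_evec (a b c : Fin m) : evec m a b + evec m b c = evec m a c := by
  funext z
  simp only [evec, Pi.add_apply]
  ring

lemma neg_evec (a b : Fin m) : -evec m a b = evec m b a := by
  funext z
  simp only [evec, Pi.neg_apply]
  ring

def InCone (E : Fin m → Fin m → Prop) (v : Fin m → ℝ) : Prop :=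
  ∃ cf : Fin m × Fin m → ℝ, (∀ e, 0 ≤ cf e) ∧ (∀ e : Fin m × Fin m, ¬E e.1 e.2 → cf e = 0) ∧
    v = ∑ e : Fin m × Fin m, cf e • evec m e.1 e.2

variable {E : Fin m → Fin m → Prop}

lemma InCone.add {v w : Fin m → ℝ} (hv : InCone E v) (hw : InCone E w) : InCone E (v + w) := by
  obtain ⟨cf, hpos, hsupp, rfl⟩ := hv
  obtain ⟨cf', hpos', hsupp', rfl⟩ := hw
  refine ⟨cf + cf', fun e => add_nonneg (hpos e) (hpos' e), fun e he => ?_, ?_⟩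
  · simp [hsupp e he, hsupp' e he]
  · simp only [Pi.add_apply, add_smul, Finset.sum_add_distrib]

lemma inCone_evec_of_rel {a b : Fin m} (h : E a b) : InCone E (evec m a b) := by
  classical
  refine ⟨Pi.single (a, b) 1, fun e => ?_, fun e he => ?_, ?_⟩
  · by_cases hab : e = (a, b) <;> simp [hab]
  · have : e ≠ (a, b) := by rintro rfl; exact he h
    simp [this]
  · simp [Pi.single_apply, ite_smul]

lemma inCone_evec_of_reflTransGen {a b : Fin m} (h : ReflTransGen E a b) :
    InCone E (evec m a b) := by
  induction h with
  | refl => exact ⟨0, fun _ => le_rfl, fun _ _ => rfl, by simp [evec_self]⟩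
  | tail _ hbc ih => simpa only [evec_add_evec] using ih.add (inCone_evec_of_rel hbc)

lemma sum_evec_apply (S : Finset (Fin m)) (a b : Fin m) :
    ∑ z ∈ S, evec m a b z = (if a ∈ S then 1 else 0) - (if b ∈ S then 1 else 0) := by
  simp [evec, Finset.sum_sub_distrib]

/-- The set `S` of vertices from which `b` is reachable contains the tail of every `E`-arrow into
`S`, so `v ↦ ∑_{z ∈ S} v z` is nonnegative on the cone; on `e_a - e_b` it is `[a ∈ S] - 1`. -/
lemma reflTransGen_of_inCone_evec {a b : Fin m} (h : InCone E (evec m a b)) :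
    ReflTransGen E a b := by
  classical
  obtain ⟨cf, hpos, hsupp, hsum⟩ := h
  set S := Finset.univ.filter fun z => ReflTransGen E z b
  have hS : ∀ e : Fin m × Fin m, 0 ≤ cf e * ∑ z ∈ S, evec m e.1 e.2 z := by
    intro e
    by_cases he : E e.1 e.2
    · have hclosed : e.2 ∈ S → e.1 ∈ S := by
        simpa [S] using fun h2 => ReflTransGen.head he h2
      rw [sum_evec_apply]
      apply mul_nonneg (hpos e)
      split_ifs <;> simp_all
    · simp [hsupp e he]
  have key : ∑ z ∈ S, evec m a b z = ∑ e, cf e * ∑ z ∈ S, evec m e.1 e.2 z := by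
    rw [hsum]
    simp only [Finset.sum_apply, Pi.smul_apply, smul_eq_mul, Finset.mul_sum]
    exact Finset.sum_comm
  have hb : b ∈ S := by simp [S, ReflTransGen.refl]
  by_contra ha
  have ha' : a ∉ S := by simpa [S] using ha
  have := Finset.sum_nonneg fun e (_ : e ∈ Finset.univ) => hS e
  rw [← key, sum_evec_apply, if_neg ha', if_pos hb] at this
  norm_num at this

theorem inCone_evec_iff {a b : Fin m} : InCone E (evec m a b) ↔ ReflTransGen E a b :=
  ⟨reflTransGen_of_inCone_evec, inCone_evec_of_reflTransGen⟩

def AscAdj (T : SimpleGraph (Fin m)) (x y : Fin m) : Prop := x < y ∧ T.Adj x y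

theorem rootPoly_eq (T : SimpleGraph (Fin m)) :
    rootPoly T = convexHull ℝ ({0} ∪ {v | ∃ a b : Fin m, a < b ∧ v = evec m a b ∧
      ReflTransGen (AscAdj T) a b}) := by
  unfold rootPoly
  congr 2
  ext v
  refine exists₂_congr fun a b => and_congr_right fun _ => and_congr_right fun hv => ?_
  subst hv
  exact inCone_evec_iff (E := AscAdj T)

end RootCone

section Dimension

variable {m : ℕ}

def coordSum (m : ℕ) : (Fin m → ℝ) →ₗ[ℝ] ℝ := Fintype.linearCombination ℝ fun _ => 1

lemma coordSum_apply (v : Fin m → ℝ) : coordSum m v = ∑ z, v z := by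
  simp [coordSum, Fintype.linearCombination_apply]

lemma coordSum_evec (a b : Fin m) : coordSum m (evec m a b) = 0 := by
  simp [coordSum_apply, evec, Finset.sum_sub_distrib]

lemma finrank_ker_coordSum (hm : 0 < m) :
    Module.finrank ℝ (LinearMap.ker (coordSum m)) = m - 1 := by
  have hsurj : Function.Surjective (coordSum m) := fun x =>
    ⟨Pi.single ⟨0, hm⟩ x, by simp [coordSum]⟩
  have := LinearMap.finrank_range_add_finrank_ker (coordSum m)
  rw [LinearMap.range_eq_top.2 hsurj, finrank_top, Module.finrank_self,
    Module.finrank_fintype_fun_eq_card, Fintype.card_fin] at this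
  omega

variable {T : SimpleGraph (Fin m)}

lemma rootPoly_subset_ker_coordSum :
    rootPoly T ⊆ (LinearMap.ker (coordSum m) : Set (Fin m → ℝ)) := by
  refine convexHull_min ?_ (LinearMap.ker (coordSum m)).convex
  rintro v (rfl | ⟨a, b, -, rfl, -⟩)
  · exact Submodule.zero_mem _
  · exact coordSum_evec a b

lemma evec_mem_vectorSpan_rootPoly_of_adj {a b : Fin m} (h : T.Adj a b) :
    evec m a b ∈ vectorSpan ℝ (rootPoly T) := by
  wlog hab : a < b generalizing a b
  · rw [← neg_evec]
    exact Submodule.neg_mem _ (this h.symm (lt_of_le_of_ne (not_lt.1 hab) h.ne.symm))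
  have h0 : (0 : Fin m → ℝ) ∈ rootPoly T := subset_convexHull ℝ _ (Or.inl rfl)
  have h1 : evec m a b ∈ rootPoly T := by
    rw [rootPoly_eq]
    exact subset_convexHull ℝ _ (Or.inr ⟨a, b, hab, rfl, .single ⟨hab, h⟩⟩)
  simpa using vsub_mem_vectorSpan ℝ h1 h0

lemma evec_mem_vectorSpan_rootPoly_of_reachable {a b : Fin m} (h : T.Reachable a b) :
    evec m a b ∈ vectorSpan ℝ (rootPoly T) := by
  obtain ⟨p⟩ := h
  induction p with
  | nil => simp [evec_self]
  | cons hadj _ ih =>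
    rw [← evec_add_evec]
    exact Submodule.add_mem _ (evec_mem_vectorSpan_rootPoly_of_adj hadj) ih

/-- For a connected graph the root polytope spans the hyperplane `∑ z, v z = 0`, since the
differences `e_z - e_r` can be telescoped along walks to a fixed vertex `r`. -/
theorem finrank_vectorSpan_rootPoly (hT : T.Connected) :
    Module.finrank ℝ (vectorSpan ℝ (rootPoly T)) = m - 1 := by
  obtain ⟨r⟩ := hT.nonempty
  suffices vectorSpan ℝ (rootPoly T) = LinearMap.ker (coordSum m) by
    rw [this, finrank_ker_coordSum (Fin.pos r)]
  apply le_antisymm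
  · rw [vectorSpan, Submodule.span_le]
    rintro _ ⟨x, hx, y, hy, rfl⟩
    exact Submodule.sub_mem _ (rootPoly_subset_ker_coordSum hx) (rootPoly_subset_ker_coordSum hy)
  · intro u hu
    have hu' : ∑ z, u z = 0 := by rwa [LinearMap.mem_ker, coordSum_apply] at hu
    have hrep : u = ∑ z, u z • evec m z r := by
      funext t
      simp [evec, Finset.sum_apply, mul_sub, Finset.sum_sub_distrib, hu']
    rw [hrep]
    exact Submodule.sum_mem _ fun z _ =>
      Submodule.smul_mem _ _ (evec_mem_vectorSpan_rootPoly_of_reachable (hT z r))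

end Dimension

namespace SimpleGraph

variable {V : Type*}

def parentGraph (root : V) (par : V → V) : SimpleGraph V :=
  fromRel fun v w => v ≠ root ∧ par v = w

variable {root : V} {par : V → V}

lemma parentGraph_adj {v w : V} : (parentGraph root par).Adj v w ↔
    v ≠ w ∧ ((v ≠ root ∧ par v = w) ∨ (w ≠ root ∧ par w = v)) :=
  fromRel_adj _ _ _

lemma ne_parent_of_rank {ρ : V → ℕ} (hρ : ∀ v, v ≠ root → ρ (par v) < ρ v) {v : V}
    (hv : v ≠ root) : v ≠ par v :=
  fun h => (hρ v hv).ne' (congrArg ρ h)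

lemma parentGraph_reachable_root {ρ : V → ℕ} (hρ : ∀ v, v ≠ root → ρ (par v) < ρ v) (v : V) :
    (parentGraph root par).Reachable v root := by
  induction h : ρ v using Nat.strong_induction_on generalizing v with
  | _ k ih =>
    by_cases hv : v = root
    · rw [hv]
    · have hadj : (parentGraph root par).Adj v (par v) :=
        parentGraph_adj.2 ⟨ne_parent_of_rank hρ hv, Or.inl ⟨hv, rfl⟩⟩
      exact hadj.reachable.trans (ih _ (h ▸ hρ v hv) _ rfl)

lemma edgeSet_parentGraph {ρ : V → ℕ} (hρ : ∀ v, v ≠ root → ρ (par v) < ρ v) :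
    (parentGraph root par).edgeSet = (fun v => s(v, par v)) '' {root}ᶜ := by
  ext e
  induction e using Sym2.ind with
  | _ v w =>
    rw [mem_edgeSet, parentGraph_adj]
    constructor
    · rintro ⟨-, ⟨hv, rfl⟩ | ⟨hw, rfl⟩⟩
      · exact ⟨v, hv, rfl⟩
      · exact ⟨w, hw, Sym2.eq_swap⟩
    · rintro ⟨u, hu, he⟩
      rcases Sym2.eq_iff.1 he with ⟨rfl, rfl⟩ | ⟨rfl, rfl⟩
      · exact ⟨ne_parent_of_rank hρ hu, Or.inl ⟨hu, rfl⟩⟩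
      · exact ⟨(ne_parent_of_rank hρ hu).symm, Or.inr ⟨hu, rfl⟩⟩

/-- The edges `s(v, par v)`, `v ≠ root`, are pairwise distinct because ranks decrease towards the
root, so the connected graph `parentGraph root par` has `|V| - 1` edges. -/
theorem isTree_parentGraph [Finite V] (ρ : V → ℕ) (hρ : ∀ v, v ≠ root → ρ (par v) < ρ v) :
    (parentGraph root par).IsTree := by
  have hinj : Set.InjOn (fun v => s(v, par v)) {root}ᶜ := by
    intro u hu v hv huv
    rcases Sym2.eq_iff.1 huv with ⟨h, -⟩ | ⟨h1, h2⟩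
    · exact h
    · have hu' := hρ u hu
      have hv' := hρ v hv
      rw [h2] at hu'
      rw [← h1] at hv'
      omega
  rw [isTree_iff_connected_and_card]
  refine ⟨(connected_iff _).2 ⟨fun v w => (parentGraph_reachable_root hρ v).trans
    (parentGraph_reachable_root hρ w).symm, ⟨root⟩⟩, ?_⟩
  rw [Nat.card_coe_set_eq, edgeSet_parentGraph hρ, hinj.ncard_image,
    Set.ncard_compl, Set.ncard_singleton]
  have : 0 < Nat.card V := Nat.card_pos_iff.2 ⟨⟨root⟩, inferInstance⟩
  omega

end SimpleGraph

lemma Occupies.rows_eq {A : Set (ℕ × ℕ)} {r c R j : ℕ} (h : Occupies A r c) (hR : (R, j) ∈ A)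
    (hle : ∀ p ∈ A, p.1 ≤ R) : r = R := by
  have hRr := h.1 _ hR
  obtain ⟨j', hj'⟩ := h.2.1 r (by omega) le_rfl
  have := hle _ hj'
  omega

lemma Occupies.cols_eq {A : Set (ℕ × ℕ)} {r c C i : ℕ} (h : Occupies A r c) (hC : (i, C) ∈ A)
    (hle : ∀ p ∈ A, p.2 ≤ C) : c = C := by
  have hCc := h.1 _ hC
  obtain ⟨i', hi'⟩ := h.2.2 c (by omega) le_rfl
  have := hle _ hi'
  omega

lemma IsPermOn.mem_Icc {n : ℕ} {π : Equiv.Perm ℕ} (hπ : IsPermOn n π) {x : ℕ} (hx1 : 1 ≤ x)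
    (hxn : x ≤ n) : 1 ≤ π x ∧ π x ≤ n := by
  by_contra h
  rw [π.injective (hπ (π x) h)] at h
  exact h ⟨hx1, hxn⟩

lemma IsPermOn.le_of_mem_RD {n : ℕ} {π : Equiv.Perm ℕ} (hπ : IsPermOn n π) {u v : ℕ}
    (h : (u, v) ∈ RD π) : u ≤ n ∧ v < n := by
  obtain ⟨i, j, hij, hπij, heq⟩ := h
  rw [Prod.mk.injEq] at heq
  rw [heq.1, heq.2]
  have hjn : j ≤ n := by
    by_contra! hj
    have hπj := hπ j (by omega)
    by_cases hi : 1 ≤ i ∧ i ≤ n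
    · have := hπ.mem_Icc hi.1 hi.2
      omega
    · have := hπ i hi
      omega
  exact ⟨(hπ.mem_Icc (by omega) hjn).2, by omega⟩

structure IsPartition (ℓ : ℕ) (lam : ℕ → ℕ) : Prop where
  one_le : 1 ≤ ℓ
  anti : ∀ i j : ℕ, 1 ≤ i → i ≤ j → j ≤ ℓ → lam j ≤ lam i
  pos : ∀ i : ℕ, 1 ≤ i → i ≤ ℓ → 1 ≤ lam i

namespace DominantTree

variable (ℓ : ℕ) (lam : ℕ → ℕ)

/-- The corners of `λ`; they index `Ess(π)`. -/
def corners : Finset ℕ := (Finset.Icc 1 ℓ).filter fun a => a = ℓ ∨ lam (a + 1) < lam a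

/-- The last `a ≤ ℓ` with `j ≤ λ_a + 1`. For `1 ≤ j ≤ λ_1 + 1`, the bottom box of column `j` of
`L(π)` lies in row `lastRow j + 1`. -/
def lastRow (j : ℕ) : ℕ := Nat.findGreatest (fun a => j ≤ lam a + 1) ℓ

def nextCorner (x : ℕ) : ℕ := lastRow ℓ lam (lam (x + 1) + 1)

/-- The columns of `L(π)` whose bottom box is not the last box of its row. -/
def freeCols : Finset ℕ := (Finset.Icc 1 (lam 1 + 1)).filter fun j => j ≤ lam (lastRow ℓ lam j)

def youngL : Set (ℕ × ℕ) :=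
  {p | 1 ≤ p.1 ∧ 1 ≤ p.2 ∧ p.2 ≤ lam 1 + 1 ∧ p.1 ≤ lastRow ℓ lam p.2 + 1}

def shiftedDiagram : Set (ℕ × ℕ) :=
  {p | ∃ i j : ℕ, 1 ≤ i ∧ i ≤ ℓ ∧ 1 ≤ j ∧ j ≤ lam i ∧ p = (i + 1, j + 1)}

variable {ℓ lam}

lemma mem_corners {a : ℕ} :
    a ∈ corners ℓ lam ↔ 1 ≤ a ∧ a ≤ ℓ ∧ (a = ℓ ∨ lam (a + 1) < lam a) := by
  simp [corners, and_assoc]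

lemma mem_freeCols {j : ℕ} :
    j ∈ freeCols ℓ lam ↔ (1 ≤ j ∧ j ≤ lam 1 + 1) ∧ j ≤ lam (lastRow ℓ lam j) := by
  simp [freeCols]

lemma mem_youngL {i j : ℕ} :
    (i, j) ∈ youngL ℓ lam ↔ 1 ≤ i ∧ 1 ≤ j ∧ j ≤ lam 1 + 1 ∧ i ≤ lastRow ℓ lam j + 1 :=
  Iff.rfl

lemma lastRow_le (j : ℕ) : lastRow ℓ lam j ≤ ℓ := Nat.findGreatest_le ℓ

lemma le_lastRow {a j : ℕ} (ha : a ≤ ℓ) (hj : j ≤ lam a + 1) : a ≤ lastRow ℓ lam j :=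
  Nat.le_findGreatest ha hj

lemma le_lam_lastRow_add_one (hℓ : 1 ≤ ℓ) {j : ℕ} (hj : j ≤ lam 1 + 1) :
    j ≤ lam (lastRow ℓ lam j) + 1 :=
  Nat.findGreatest_spec (P := fun a => j ≤ lam a + 1) hℓ hj

lemma one_le_lastRow (hℓ : 1 ≤ ℓ) {j : ℕ} (hj : j ≤ lam 1 + 1) : 1 ≤ lastRow ℓ lam j :=
  le_lastRow hℓ hj

lemma lastRow_mem_corners (hℓ : 1 ≤ ℓ) {j : ℕ} (hj : j ≤ lam 1 + 1) :
    lastRow ℓ lam j ∈ corners ℓ lam := by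
  refine mem_corners.2 ⟨one_le_lastRow hℓ hj, lastRow_le j, ?_⟩
  by_cases h : lastRow ℓ lam j = ℓ
  · exact .inl h
  · have hnext : ¬j ≤ lam (lastRow ℓ lam j + 1) + 1 :=
      Nat.findGreatest_is_greatest (P := fun a => j ≤ lam a + 1) (Nat.lt_succ_self _)
        (Nat.succ_le_of_lt (lt_of_le_of_ne (lastRow_le j) h))
    have := le_lam_lastRow_add_one hℓ hj
    omega

lemma lastRow_le_of_mem_corners (hlam : IsPartition ℓ lam) {c j : ℕ} (hc : c ∈ corners ℓ lam)
    (hj : lam c + 1 ≤ j) : lastRow ℓ lam j ≤ c := by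
  by_contra! hlt
  obtain ⟨hc1, -, hc⟩ := mem_corners.1 hc
  have hle := lastRow_le (ℓ := ℓ) (lam := lam) j
  have hspec : j ≤ lam (lastRow ℓ lam j) + 1 :=
    Nat.findGreatest_of_ne_zero (P := fun a => j ≤ lam a + 1) rfl (by omega)
  have hanti := hlam.anti (c + 1) (lastRow ℓ lam j) (by omega) hlt hle
  have := hc.resolve_left (by omega)
  omega

lemma lastRow_lam_add_one (hlam : IsPartition ℓ lam) {c : ℕ} (hc : c ∈ corners ℓ lam) :
    lastRow ℓ lam (lam c + 1) = c :=
  le_antisymm (lastRow_le_of_mem_corners hlam hc le_rfl) (le_lastRow (mem_corners.1 hc).2.1 le_rfl)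

lemma lam_add_one_le_of_mem_corners (hlam : IsPartition ℓ lam) {a : ℕ} (ha : a ∈ corners ℓ lam) :
    lam a + 1 ≤ lam 1 + 1 := by
  obtain ⟨ha1, haℓ, -⟩ := mem_corners.1 ha
  have := hlam.anti 1 a le_rfl ha1 haℓ
  omega

lemma lt_nextCorner {x : ℕ} (hx : x < ℓ) : x < nextCorner ℓ lam x :=
  le_lastRow hx le_rfl

lemma nextCorner_mem_corners (hlam : IsPartition ℓ lam) {x : ℕ} (hx : x < ℓ) :
    nextCorner ℓ lam x ∈ corners ℓ lam :=
  lastRow_mem_corners hlam.one_le (by have := hlam.anti 1 (x + 1) le_rfl (by omega) hx; omega)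

lemma nextCorner_le (hlam : IsPartition ℓ lam) {x c : ℕ} (hc : c ∈ corners ℓ lam) (hxc : x < c) :
    nextCorner ℓ lam x ≤ c := by
  obtain ⟨-, hcℓ, -⟩ := mem_corners.1 hc
  exact lastRow_le_of_mem_corners hlam hc
    (by have := hlam.anti (x + 1) c (by omega) hxc hcℓ; omega)

lemma lam_lastRow_add_one (hℓ : 1 ≤ ℓ) {j : ℕ} (hj1 : 1 ≤ j) (hj : j ≤ lam 1 + 1)
    (hfree : j ∉ freeCols ℓ lam) : lam (lastRow ℓ lam j) + 1 = j := by
  have := le_lam_lastRow_add_one hℓ hj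
  have : ¬j ≤ lam (lastRow ℓ lam j) := fun h => hfree (mem_freeCols.2 ⟨⟨hj1, hj⟩, h⟩)
  omega

lemma lam_add_one_not_mem_freeCols (hlam : IsPartition ℓ lam) {c : ℕ} (hc : c ∈ corners ℓ lam) :
    lam c + 1 ∉ freeCols ℓ lam := by
  rw [mem_freeCols, lastRow_lam_add_one hlam hc]
  omega

/-- The non-free columns are the columns `λ_c + 1` ending at a corner `c`. -/
lemma card_freeCols_add_card_corners (hlam : IsPartition ℓ lam) :
    #(freeCols ℓ lam) + #(corners ℓ lam) = lam 1 + 1 := by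
  have hcorner : (Finset.Icc 1 (lam 1 + 1)).filter (fun j => ¬j ≤ lam (lastRow ℓ lam j)) =
      (corners ℓ lam).image fun c => lam c + 1 := by
    ext j
    simp only [Finset.mem_filter, Finset.mem_Icc, Finset.mem_image]
    constructor
    · rintro ⟨⟨hj1, hj⟩, hfree⟩
      refine ⟨lastRow ℓ lam j, lastRow_mem_corners hlam.one_le hj, ?_⟩
      exact lam_lastRow_add_one hlam.one_le hj1 hj fun h => hfree (mem_freeCols.1 h).2
    · rintro ⟨c, hc, rfl⟩
      refine ⟨⟨by omega, lam_add_one_le_of_mem_corners hlam hc⟩, fun h => ?_⟩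
      exact lam_add_one_not_mem_freeCols hlam hc
        (mem_freeCols.2 ⟨⟨by omega, lam_add_one_le_of_mem_corners hlam hc⟩, h⟩)
  have hinj : Set.InjOn (fun c => lam c + 1) (corners ℓ lam : Set ℕ) := fun c hc c' hc' h => by
    rw [← lastRow_lam_add_one hlam hc, ← lastRow_lam_add_one hlam hc']
    exact congrArg (lastRow ℓ lam) h
  rw [freeCols, ← Finset.card_image_of_injOn hinj, ← hcorner,
    Finset.card_filter_add_card_filter_not, Nat.card_Icc]
  omega

variable {π : Equiv.Perm ℕ}

lemma mem_shiftedDiagram {x y : ℕ} :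
    (x, y) ∈ shiftedDiagram ℓ lam ↔ 2 ≤ x ∧ x ≤ ℓ + 1 ∧ 2 ≤ y ∧ y ≤ lam (x - 1) + 1 := by
  constructor
  · rintro ⟨i, j, hi1, hiℓ, hj1, hj, heq⟩
    obtain ⟨rfl, rfl⟩ := Prod.mk.inj heq
    simp only [Nat.add_sub_cancel]
    omega
  · rintro ⟨hx2, hxℓ, hy2, hy⟩
    exact ⟨x - 1, y - 1, by omega, by omega, by omega, by omega, by ext <;> simp only <;> omega⟩

lemma lset_eq (hlam : IsPartition ℓ lam) (hRD : RD π = shiftedDiagram ℓ lam) :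
    Lset π = youngL ℓ lam := by
  have hdom : domPiece π = ∅ := by
    refine Set.eq_empty_of_forall_notMem fun q hq => ?_
    have := hq.1
    rw [hRD, mem_shiftedDiagram] at this
    omega
  rw [Lset, hdom, Set.sdiff_empty]
  ext ⟨i, j⟩
  simp only [NWset, hRD, Prod.exists, mem_youngL]
  constructor
  · rintro ⟨hi, hj1, x, y, hxy, hix, hjy⟩
    obtain ⟨hx2, hxℓ, -, hy⟩ := mem_shiftedDiagram.1 hxy
    have := hlam.anti 1 (x - 1) le_rfl (by omega) (by omega)
    have := le_lastRow (lam := lam) (show x - 1 ≤ ℓ by omega) (show j ≤ lam (x - 1) + 1 by omega)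
    exact ⟨hi, hj1, by omega, by omega⟩
  · rintro ⟨hi, hj1, hj, hij⟩
    refine ⟨hi, hj1, lastRow ℓ lam j + 1, lam (lastRow ℓ lam j) + 1, ?_, hij,
      le_lam_lastRow_add_one hlam.one_le hj⟩
    have hle := lastRow_le (ℓ := ℓ) (lam := lam) j
    have h1 := one_le_lastRow hlam.one_le hj
    have := hlam.pos _ h1 hle
    rw [mem_shiftedDiagram]
    simp only [Nat.add_sub_cancel]
    exact ⟨by omega, by omega, by omega, le_rfl⟩

lemma occupies_youngL {r c : ℕ} (h : Occupies (youngL ℓ lam) r c) :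
    r = ℓ + 1 ∧ c = lam 1 + 1 := by
  have hlast := lastRow_le (ℓ := ℓ) (lam := lam)
  refine ⟨h.rows_eq (j := 1) (mem_youngL.2 ⟨by omega, le_rfl, by omega, ?_⟩) fun p hp => ?_,
    h.cols_eq (i := 1) (mem_youngL.2 ⟨le_rfl, by omega, le_rfl, by omega⟩) fun p hp => hp.2.2.1⟩
  · have := le_lastRow (lam := lam) (a := ℓ) (j := 1) le_rfl (by omega)
    omega
  · have := hp.2.2.2
    have := hlast p.2
    omega

lemma size_le_of_isPermOn {n : ℕ} (hπ : IsPermOn n π) (hlam : IsPartition ℓ lam)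
    (hRD : RD π = shiftedDiagram ℓ lam) : ℓ + 1 ≤ n ∧ lam 1 + 1 ≤ n := by
  have hlast := hπ.le_of_mem_RD (u := ℓ + 1) (v := lam ℓ + 1) (hRD ▸ mem_shiftedDiagram.2
    ⟨by have := hlam.one_le; omega, le_rfl, by have := hlam.pos ℓ hlam.one_le le_rfl; omega,
      by simp⟩)
  have hfirst := hπ.le_of_mem_RD (u := 2) (v := lam 1 + 1) (hRD ▸ mem_shiftedDiagram.2
    ⟨le_rfl, by have := hlam.one_le; omega, by have := hlam.pos 1 le_rfl hlam.one_le; omega,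
      le_rfl⟩)
  omega

lemma essSet_eq (hlam : IsPartition ℓ lam) (hRD : RD π = shiftedDiagram ℓ lam) :
    EssSet π = (fun a => (a + 1, lam a + 1)) '' (corners ℓ lam : Set ℕ) := by
  ext ⟨x, y⟩
  simp only [EssSet, hRD, Set.mem_ofPred_eq, mem_shiftedDiagram, Set.mem_image, Finset.mem_coe,
    mem_corners, Prod.mk.injEq]
  constructor
  · rintro ⟨⟨hx2, hxℓ, hy2, hy⟩, hdown, hright⟩
    refine ⟨x - 1, ⟨by omega, by omega, ?_⟩, by omega, by omega⟩
    by_cases hxℓ' : x - 1 = ℓ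
    · exact .inl hxℓ'
    · simp only [Nat.add_sub_cancel] at hdown hright
      rw [Nat.sub_add_cancel (by omega : 1 ≤ x)]
      omega
  · rintro ⟨a, ⟨ha1, haℓ, ha⟩, rfl, rfl⟩
    have := hlam.pos a ha1 haℓ
    simp only [Nat.add_sub_cancel]
    omega

lemma ncard_essSet (hlam : IsPartition ℓ lam) (hRD : RD π = shiftedDiagram ℓ lam) :
    (EssSet π).ncard = #(corners ℓ lam) := by
  rw [essSet_eq hlam hRD, Set.ncard_image_of_injective _ fun a b h => by
    simpa using congrArg Prod.fst h, Set.ncard_coe_finset]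

variable (ℓ lam)

noncomputable def freeCol (i : Fin #(freeCols ℓ lam)) : ℕ := (freeCols ℓ lam).equivFin.symm i

/-- The vertex of `T` attached to column `j`: a new vertex `> ℓ` for a free column, otherwise
the row vertex of its bottom box. -/
noncomputable def colVertex (j : ℕ) : ℕ :=
  if h : j ∈ freeCols ℓ lam then ℓ + 1 + (freeCols ℓ lam).equivFin ⟨j, h⟩ else lastRow ℓ lam j

/-- Vertex `x ≤ ℓ` stands for row `x + 1` of `L(π)` and vertex `ℓ + 1 + i` for the free column
`freeCol i`. A row vertex `x < ℓ` hangs from the next corner below it, a free column from the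
vertex of its bottom row. -/
noncomputable def treeParent (v : Fin (ℓ + 1 + #(freeCols ℓ lam))) :
    Fin (ℓ + 1 + #(freeCols ℓ lam)) :=
  ⟨if h : (v : ℕ) ≤ ℓ then nextCorner ℓ lam v
    else lastRow ℓ lam (freeCol ℓ lam ⟨v - (ℓ + 1), by omega⟩),
    by split_ifs <;> exact Nat.lt_of_le_of_lt (lastRow_le _) (by omega)⟩

noncomputable def cornerTree : SimpleGraph (Fin (ℓ + 1 + #(freeCols ℓ lam))) :=
  SimpleGraph.parentGraph ⟨ℓ, by omega⟩ (treeParent ℓ lam)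

variable {ℓ lam}

lemma freeCol_mem (i : Fin #(freeCols ℓ lam)) : freeCol ℓ lam i ∈ freeCols ℓ lam :=
  ((freeCols ℓ lam).equivFin.symm i).2

lemma colVertex_freeCol (i : Fin #(freeCols ℓ lam)) :
    colVertex ℓ lam (freeCol ℓ lam i) = ℓ + 1 + i := by
  rw [colVertex, dif_pos (freeCol_mem i)]
  simp [freeCol]

lemma colVertex_of_not_mem {j : ℕ} (h : j ∉ freeCols ℓ lam) : colVertex ℓ lam j = lastRow ℓ lam j :=
  dif_neg h

lemma lt_colVertex_iff {j : ℕ} : ℓ < colVertex ℓ lam j ↔ j ∈ freeCols ℓ lam := by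
  unfold colVertex
  split_ifs with h
  · simp only [h, iff_true]
    omega
  · simp [h, lastRow_le]

lemma colVertex_injOn {j j' : ℕ} (hj : j ∈ freeCols ℓ lam) (hj' : j' ∈ freeCols ℓ lam)
    (h : colVertex ℓ lam j = colVertex ℓ lam j') : j = j' := by
  rw [colVertex, dif_pos hj, colVertex, dif_pos hj'] at h
  have : (freeCols ℓ lam).equivFin ⟨j, hj⟩ = (freeCols ℓ lam).equivFin ⟨j', hj'⟩ :=
    Fin.ext (by omega)
  exact congrArg Subtype.val ((freeCols ℓ lam).equivFin.injective this)

lemma colVertex_lt (j : ℕ) : colVertex ℓ lam j < ℓ + 1 + #(freeCols ℓ lam) := by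
  unfold colVertex
  split_ifs
  · simp
  · exact Nat.lt_of_le_of_lt (lastRow_le j) (by omega)

lemma colVertex_lam_add_one (hlam : IsPartition ℓ lam) {c : ℕ} (hc : c ∈ corners ℓ lam) :
    colVertex ℓ lam (lam c + 1) = c := by
  rw [colVertex_of_not_mem (lam_add_one_not_mem_freeCols hlam hc), lastRow_lam_add_one hlam hc]

lemma treeParent_of_le {v : Fin (ℓ + 1 + #(freeCols ℓ lam))} (hv : (v : ℕ) ≤ ℓ) :
    (treeParent ℓ lam v : ℕ) = nextCorner ℓ lam v := by
  simp [treeParent, hv]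

lemma exists_treeParent_of_lt {v : Fin (ℓ + 1 + #(freeCols ℓ lam))} (hv : ℓ < v) :
    ∃ j ∈ freeCols ℓ lam, colVertex ℓ lam j = v ∧ (treeParent ℓ lam v : ℕ) = lastRow ℓ lam j := by
  refine ⟨_, freeCol_mem ⟨v - (ℓ + 1), by omega⟩, ?_, by simp [treeParent, not_le.2 hv]⟩
  rw [colVertex_freeCol]
  simp only
  omega

theorem isTree_cornerTree : (cornerTree ℓ lam).IsTree := by
  refine SimpleGraph.isTree_parentGraph (fun v => if (v : ℕ) ≤ ℓ then ℓ - v else ℓ + 1)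
    fun v hv => ?_
  have hvℓ : (v : ℕ) ≠ ℓ := fun h => hv (Fin.ext h)
  have hpar := lastRow_le (ℓ := ℓ) (lam := lam)
  by_cases hle : (v : ℕ) ≤ ℓ
  · have hlt := lt_nextCorner (lam := lam) (show (v : ℕ) < ℓ by omega)
    have := hpar (lam (v + 1) + 1)
    simp only [treeParent_of_le hle, hle, if_true, nextCorner] at hlt ⊢
    split_ifs
    omega
  · obtain ⟨j, -, -, hj⟩ := exists_treeParent_of_lt (not_le.1 hle)
    have := hpar j
    simp only [hj, hle, if_false]
    split_ifs
    omega

variable {v w : Fin (ℓ + 1 + #(freeCols ℓ lam))}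

lemma cornerTree_adj : (cornerTree ℓ lam).Adj v w ↔ v ≠ w ∧
    (((v : ℕ) ≠ ℓ ∧ treeParent ℓ lam v = w) ∨ ((w : ℕ) ≠ ℓ ∧ treeParent ℓ lam w = v)) := by
  simp [cornerTree, SimpleGraph.parentGraph_adj, Fin.ext_iff]

lemma ascAdj_of_nextCorner (hv : (v : ℕ) < ℓ) (hw : (w : ℕ) = nextCorner ℓ lam v) :
    AscAdj (cornerTree ℓ lam) v w := by
  have hlt : v < w := by rw [Fin.lt_def, hw]; exact lt_nextCorner hv
  refine ⟨hlt, cornerTree_adj.2 ⟨hlt.ne, .inl ⟨hv.ne, Fin.ext ?_⟩⟩⟩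
  rw [treeParent_of_le hv.le, hw]

lemma ascAdj_of_mem_freeCols {j : ℕ} (hj : j ∈ freeCols ℓ lam) (hv : (v : ℕ) = lastRow ℓ lam j)
    (hw : (w : ℕ) = colVertex ℓ lam j) : AscAdj (cornerTree ℓ lam) v w := by
  have hℓw : ℓ < (w : ℕ) := hw ▸ lt_colVertex_iff.2 hj
  have hlt : v < w := by rw [Fin.lt_def, hv]; exact Nat.lt_of_le_of_lt (lastRow_le j) hℓw
  refine ⟨hlt, cornerTree_adj.2 ⟨hlt.ne, .inr ⟨hℓw.ne', Fin.ext ?_⟩⟩⟩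
  obtain ⟨j', hj', hj'w, hpar⟩ := exists_treeParent_of_lt hℓw
  rw [hpar, hv, colVertex_injOn hj' hj (hj'w.trans hw)]

lemma ascAdj_cases (h : AscAdj (cornerTree ℓ lam) v w) :
    ((v : ℕ) < ℓ ∧ (w : ℕ) = nextCorner ℓ lam v) ∨
      ∃ j ∈ freeCols ℓ lam, (v : ℕ) = lastRow ℓ lam j ∧ (w : ℕ) = colVertex ℓ lam j := by
  obtain ⟨hlt, -, ⟨hv, rfl⟩ | ⟨hw, rfl⟩⟩ := h.imp_right cornerTree_adj.1
  · rw [Fin.lt_def] at hlt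
    by_cases hle : (v : ℕ) ≤ ℓ
    · exact .inl ⟨by omega, treeParent_of_le hle⟩
    · obtain ⟨j, -, -, hj⟩ := exists_treeParent_of_lt (not_le.1 hle)
      have := lastRow_le (ℓ := ℓ) (lam := lam) j
      omega
  · rw [Fin.lt_def] at hlt
    by_cases hle : (w : ℕ) ≤ ℓ
    · have := lt_nextCorner (lam := lam) (show (w : ℕ) < ℓ by omega)
      rw [treeParent_of_le hle] at hlt
      omega
    · obtain ⟨j, hj, hjw, hpar⟩ := exists_treeParent_of_lt (not_le.1 hle)
      exact .inr ⟨j, hj, hpar, hjw.symm⟩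

lemma reflTransGen_of_mem_corners (hlam : IsPartition ℓ lam) (hw : (w : ℕ) ∈ corners ℓ lam)
    (hvw : v ≤ w) : ReflTransGen (AscAdj (cornerTree ℓ lam)) v w := by
  induction h : (w : ℕ) - v using Nat.strong_induction_on generalizing v with
  | _ k ih =>
    rcases eq_or_lt_of_le hvw with rfl | hlt
    · exact .refl
    · have hwℓ := (mem_corners.1 hw).2.1
      rw [Fin.lt_def] at hlt
      let u : Fin (ℓ + 1 + #(freeCols ℓ lam)) :=
        ⟨nextCorner ℓ lam v, Nat.lt_of_le_of_lt (lastRow_le _) (by omega)⟩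
      have hvu : AscAdj (cornerTree ℓ lam) v u := ascAdj_of_nextCorner (by omega) rfl
      have huw : u ≤ w := nextCorner_le hlam hw hlt
      have := lt_nextCorner (lam := lam) (show (v : ℕ) < ℓ by omega)
      exact .head hvu (ih _ (by simp only [u] at huw ⊢; omega) huw rfl)

lemma reflTransGen_colVertex (hlam : IsPartition ℓ lam) {j : ℕ} (hj : j ≤ lam 1 + 1)
    (hv : (v : ℕ) ≤ lastRow ℓ lam j) (hw : (w : ℕ) = colVertex ℓ lam j) :
    ReflTransGen (AscAdj (cornerTree ℓ lam)) v w := by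
  let u : Fin (ℓ + 1 + #(freeCols ℓ lam)) :=
    ⟨lastRow ℓ lam j, Nat.lt_of_le_of_lt (lastRow_le j) (by omega)⟩
  have hvu : ReflTransGen (AscAdj (cornerTree ℓ lam)) v u :=
    reflTransGen_of_mem_corners hlam (lastRow_mem_corners hlam.one_le hj) hv
  by_cases hfree : j ∈ freeCols ℓ lam
  · exact hvu.tail (ascAdj_of_mem_freeCols hfree rfl hw)
  · rwa [show w = u from Fin.ext (hw.trans (colVertex_of_not_mem hfree))]

lemma exists_mem_youngL_of_reflTransGen (hlam : IsPartition ℓ lam)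
    (h : ReflTransGen (AscAdj (cornerTree ℓ lam)) v w) :
    v = w ∨ ∃ j, ((v : ℕ) + 1, j) ∈ youngL ℓ lam ∧ colVertex ℓ lam j = w := by
  induction h with
  | refl => exact .inl rfl
  | @tail u w _ huw ih =>
    have hvu : (u : ℕ) ≤ ℓ → (v : ℕ) ≤ u := by
      intro hu
      rcases ih with rfl | ⟨j, hj, hju⟩
      · exact le_rfl
      · have := (mem_youngL.1 hj).2.2.2
        rw [← hju, colVertex_of_not_mem fun h => (lt_colVertex_iff.2 h).not_ge (hju ▸ hu)]
        omega
    right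
    rcases ascAdj_cases huw with ⟨hu, hw⟩ | ⟨j, hj, hu, hw⟩
    · have hc := nextCorner_mem_corners hlam hu
      refine ⟨lam (nextCorner ℓ lam u) + 1,
        mem_youngL.2 ⟨by omega, by omega, lam_add_one_le_of_mem_corners hlam hc, ?_⟩, ?_⟩
      · have := lt_nextCorner (lam := lam) hu
        have := hvu hu.le
        rw [lastRow_lam_add_one hlam hc]
        omega
      · rw [colVertex_lam_add_one hlam hc, hw]
    · obtain ⟨⟨hj1, hj⟩, -⟩ := mem_freeCols.1 hj
      have := hvu (hu ▸ lastRow_le j)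
      exact ⟨j, mem_youngL.2 ⟨by omega, hj1, hj, by omega⟩, hw.symm⟩

theorem image_youngL (hlam : IsPartition ℓ lam) :
    (fun p : ℕ × ℕ => ind _ (p.1 - 1) - ind _ (colVertex ℓ lam p.2)) '' youngL ℓ lam =
      {0} ∪ {x | ∃ a b : Fin (ℓ + 1 + #(freeCols ℓ lam)), a < b ∧ x = evec _ a b ∧
        ReflTransGen (AscAdj (cornerTree ℓ lam)) a b} := by
  ext x
  constructor
  · rintro ⟨⟨i, j⟩, hmem, rfl⟩
    obtain ⟨hi, hj1, hj, hij⟩ := mem_youngL.1 hmem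
    have hrow := lastRow_le (ℓ := ℓ) (lam := lam) j
    let a : Fin (ℓ + 1 + #(freeCols ℓ lam)) := ⟨i - 1, by omega⟩
    let b : Fin (ℓ + 1 + #(freeCols ℓ lam)) := ⟨colVertex ℓ lam j, colVertex_lt j⟩
    have hab : a ≤ b := by
      show i - 1 ≤ colVertex ℓ lam j
      by_cases hfree : j ∈ freeCols ℓ lam
      · have := lt_colVertex_iff.2 hfree
        omega
      · rw [colVertex_of_not_mem hfree]
        omega
    show ind _ (i - 1) - ind _ (colVertex ℓ lam j) ∈ _
    rw [← evec_eq_ind_sub_ind a b]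
    rcases eq_or_lt_of_le hab with hab | hab
    · exact .inl (by rw [hab, evec_self]; rfl)
    · exact .inr ⟨a, b, hab, rfl, reflTransGen_colVertex hlam hj (by simp only [a]; omega) rfl⟩
  · rintro (hx | ⟨a, b, hab, rfl, h⟩)
    · have hc : ℓ ∈ corners ℓ lam := mem_corners.2 ⟨hlam.one_le, le_rfl, .inl rfl⟩
      refine ⟨(ℓ + 1, lam ℓ + 1),
        mem_youngL.2 ⟨by omega, by omega, lam_add_one_le_of_mem_corners hlam hc, ?_⟩, ?_⟩
      · rw [lastRow_lam_add_one hlam hc]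
      · simp [colVertex_lam_add_one hlam hc, hx.symm]
    · rcases exists_mem_youngL_of_reflTransGen hlam h with rfl | ⟨j, hj, hjb⟩
      · exact absurd hab (lt_irrefl _)
      · exact ⟨_, hj, by simp [hjb, evec_eq_ind_sub_ind]⟩

variable (ℓ lam) in
/-- Coordinate `s < n` of `ℝ^{2n}` belongs to row `s + 1`, coordinate `n + j - 1` to column `j`. -/
noncomputable def degeneration (n : ℕ) :
    (Fin (2 * n) → ℝ) →ₗ[ℝ] (Fin (ℓ + 1 + #(freeCols ℓ lam)) → ℝ) :=
  Fintype.linearCombination ℝ fun s =>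
    ind _ (if (s : ℕ) < n then s else colVertex ℓ lam (s + 1 - n))

lemma degeneration_vtx {n i j : ℕ} (hi1 : 1 ≤ i) (hi : i ≤ n) (hj1 : 1 ≤ j) (hj : j ≤ n) :
    degeneration ℓ lam n (vtx n (i, j)) = ind _ (i - 1) - ind _ (colVertex ℓ lam j) := by
  change degeneration ℓ lam n (ind _ (i - 1) - ind _ (n + j - 1)) = _
  rw [map_sub, degeneration, linearCombination_ind _ (by omega : i - 1 < 2 * n),
    linearCombination_ind _ (by omega : n + j - 1 < 2 * n)]
  simp only
  rw [if_pos (by omega), if_neg (by omega), show n + j - 1 + 1 - n = j by omega]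

lemma image_degeneration_vtx {n : ℕ} (hℓn : ℓ + 1 ≤ n) (hn : lam 1 + 1 ≤ n) :
    (degeneration ℓ lam n ∘ vtx n) '' youngL ℓ lam =
      (fun p : ℕ × ℕ => ind _ (p.1 - 1) - ind _ (colVertex ℓ lam p.2)) '' youngL ℓ lam :=
  Set.image_congr fun ⟨i, j⟩ hp => by
    obtain ⟨hi, hj1, hj, hij⟩ := mem_youngL.1 hp
    exact degeneration_vtx hi (by have := lastRow_le (ℓ := ℓ) (lam := lam) j; omega) hj1 (by omega)

end DominantTree

open DominantTree in
theorem stmt13_general (n : ℕ) (π : Equiv.Perm ℕ) (hπ : IsPermOn n π)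
    (ℓ : ℕ) (lam : ℕ → ℕ) (hdom : DominantOne π ℓ lam)
    (r c : ℕ) (hocc : Occupies (Lset π) r c)
    (m : ℕ) (hm : m = r + c - (EssSet π).ncard) :
    ∃ T : SimpleGraph (Fin m), T.IsTree ∧
      ∃ φ : (Fin (2 * n) → ℝ) →ₗ[ℝ] (Fin m → ℝ),
        φ '' convexHull ℝ (vtx n '' Lset π) = rootPoly T ∧
        Module.finrank ℝ ↥(vectorSpan ℝ (rootPoly T)) = m - 1 := by
  obtain ⟨-, hℓ, hanti, hpos, hRD⟩ := hdom
  have hlam : IsPartition ℓ lam := ⟨hℓ, hanti, hpos⟩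
  rw [lset_eq hlam hRD] at hocc ⊢
  obtain ⟨rfl, rfl⟩ := occupies_youngL hocc
  obtain rfl : m = ℓ + 1 + #(freeCols ℓ lam) := by
    have := card_freeCols_add_card_corners hlam
    rw [hm, ncard_essSet hlam hRD]
    omega
  obtain ⟨hℓn, hcoln⟩ := size_le_of_isPermOn hπ hlam hRD
  refine ⟨cornerTree ℓ lam, isTree_cornerTree, degeneration ℓ lam n, ?_,
    finrank_vectorSpan_rootPoly isTree_cornerTree.connected⟩
  rw [LinearMap.image_convexHull, ← Set.image_comp, image_degeneration_vtx hℓn hcoln,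
    image_youngL hlam, rootPoly_eq]

theorem stmt13 (n : ℕ) (hn : 1 ≤ n) (π : Equiv.Perm ℕ) (hπ : IsPermOn n π)
    (ℓ : ℕ) (lam : ℕ → ℕ) (hdom : DominantOne π ℓ lam)
    (r c : ℕ) (hocc : Occupies (Lset π) r c)
    (m : ℕ) (hm : m = r + c - (EssSet π).ncard) :
    ∃ T : SimpleGraph (Fin m), T.IsTree ∧
      ∃ φ : (Fin (2 * n) → ℝ) →ₗ[ℝ] (Fin m → ℝ),
        φ '' convexHull ℝ (vtx n '' Lset π) = rootPoly T ∧
        Module.finrank ℝ ↥(vectorSpan ℝ (rootPoly T)) = m - 1 :=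
  stmt13_general n π hπ ℓ lam hdom r c hocc m hm
end

section
/- Let π be a permutation of {1,…,n} of the form π = 1π' with π' dominant. Then L(π) = NW(π), the bipartite graph G_{L(π)} (with a vertex for each occupied row and each occupied column of L(π) and an edge for each box of L(π)) is connected, and the affine dimension of the polytope Φ(P(Y_π)) = ConvHull{e_i − e_{n+j} : (i,j) ∈ L(π)} ⊆ ℝ^{2n} equals r + c − 2, where r and c are the number of rows and columns occupied by L(π). -/
open scoped BigOperators

/-- Two boxes of `A` lie in the same component of the bipartite graph `G_A`. -/
def sameComp (A : Set (ℕ × ℕ)) (p q : A) : Prop :=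
  Relation.ReflTransGen
    (fun a b : A => (a : ℕ × ℕ).1 = (b : ℕ × ℕ).1 ∨ (a : ℕ × ℕ).2 = (b : ℕ × ℕ).2) p q

/-- The number of connected components of the bipartite graph `G_A`. -/
noncomputable def compCount (A : Set (ℕ × ℕ)) : ℕ := Nat.card (Quot (sameComp A))

/-- Auxiliary: a permutation fixing the complement of `[1,n]` maps `[1,n]` into itself. -/
lemma permOn_mem {n : ℕ} {π : Equiv.Perm ℕ} (hπ : IsPermOn n π) {m : ℕ}
    (h1 : 1 ≤ m) (h2 : m ≤ n) : 1 ≤ π m ∧ π m ≤ n := by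
  by_contra h
  have h3 := hπ (π m) h
  have h4 : π m = m := π.injective h3
  rw [h4] at h
  exact h ⟨h1, h2⟩

/-- Auxiliary: bounds on the boxes of a Rothe diagram. -/
lemma RD_bounds {n : ℕ} {π : Equiv.Perm ℕ} (hπ : IsPermOn n π) {q : ℕ × ℕ}
    (hq : q ∈ RD π) : 1 ≤ q.1 ∧ q.1 ≤ n ∧ 1 ≤ q.2 ∧ q.2 < n := by
  obtain ⟨i, j, hij, hlt, rfl⟩ := hq
  have hi1 : 1 ≤ i := by
    by_contra h
    have : i = 0 := by omega
    subst this
    have h0 : π 0 = 0 := hπ 0 (by omega)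
    omega
  have hjn : j ≤ n := by
    by_contra h
    have hj : π j = j := hπ j (by omega)
    rw [hj] at hlt
    by_cases hin : i ≤ n
    · have := (permOn_mem hπ hi1 hin).2
      omega
    · have : π i = i := hπ i (by omega)
      omega
  have := permOn_mem hπ (by omega : 1 ≤ j) hjn
  exact ⟨this.1, this.2, hi1, by omega⟩

/-- Auxiliary: connectivity criterion for `compCount`. -/
lemma compCount_eq_one {A : Set (ℕ × ℕ)} (h11 : ((1 : ℕ), (1 : ℕ)) ∈ A)
    (hcl : ∀ p ∈ A, ((p.1 : ℕ), (1 : ℕ)) ∈ A) : compCount A = 1 := by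
  have key : ∀ p : A, sameComp A p ⟨(1, 1), h11⟩ := by
    rintro ⟨p, hp⟩
    have h1 : ((p.1, (1 : ℕ)) : ℕ × ℕ) ∈ A := hcl p hp
    exact Relation.ReflTransGen.head (b := ⟨(p.1, 1), h1⟩) (Or.inl rfl)
      (Relation.ReflTransGen.single (Or.inr rfl))
  have hsub : Subsingleton (Quot (sameComp A)) := by
    constructor
    intro x y
    induction x using Quot.ind with
    | _ a =>
      induction y using Quot.ind with
      | _ b => exact (Quot.sound (key a)).trans (Quot.sound (key b)).symm
  have hne : Nonempty (Quot (sameComp A)) := ⟨Quot.mk _ ⟨(1, 1), h11⟩⟩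
  exact Nat.card_eq_one_iff_unique.mpr ⟨hsub, hne⟩

/-- Auxiliary: indicator vectors. -/
def Ebox (n m : ℕ) : Fin (2 * n) → ℝ := fun t => if (t : ℕ) = m then 1 else 0

/-- Auxiliary: spanning family. -/
def bvec (n r c : ℕ) : Fin (r - 1) ⊕ Fin (c - 1) → Fin (2 * n) → ℝ :=
  Sum.elim (fun i => Ebox n ((i : ℕ) + 1) - Ebox n 0)
    (fun j => Ebox n n - Ebox n (n + (j : ℕ) + 1))

lemma vtx_split (n : ℕ) (p : ℕ × ℕ) :
    vtx n p - vtx n (1, 1) = (Ebox n (p.1 - 1) - Ebox n 0) + (Ebox n n - Ebox n (n + p.2 - 1)) := by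
  funext t
  simp only [vtx, Ebox, Pi.add_apply, Pi.sub_apply]
  have e1 : (((1 : ℕ), (1 : ℕ)) : ℕ × ℕ).1 - 1 = 0 := rfl
  have e2 : n + (((1 : ℕ), (1 : ℕ)) : ℕ × ℕ).2 - 1 = n := by omega
  rw [e1, e2]
  ring

lemma Ebox_mk (n m k : ℕ) (hk : k < 2 * n) : Ebox n m ⟨k, hk⟩ = if k = m then 1 else 0 := rfl

lemma bvec_li {n r c : ℕ} (hr2 : 2 ≤ r) (hc2 : 2 ≤ c) (hrn : r ≤ n) (hcn : c ≤ n) :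
    LinearIndependent ℝ (bvec n r c) := by
  rw [Fintype.linearIndependent_iff]
  intro g hg
  have key : ∀ t : Fin (2 * n), (∑ k, g k • bvec n r c k) t = 0 := by
    intro t; rw [hg]; rfl
  have grow : ∀ i : Fin (r - 1), g (Sum.inl i) = 0 := by
    intro i
    have hi := i.isLt
    have ht : ((i : ℕ) + 1) < 2 * n := by omega
    have h := key ⟨(i : ℕ) + 1, ht⟩
    rw [Finset.sum_apply, Fintype.sum_sum_type] at h
    simp only [Pi.smul_apply, smul_eq_mul] at h
    have hsum2 : ∑ j' : Fin (c - 1),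
        g (Sum.inr j') * (bvec n r c (Sum.inr j') ⟨(i : ℕ) + 1, ht⟩) = 0 := by
      apply Finset.sum_eq_zero
      intro j' _
      have hz : bvec n r c (Sum.inr j') ⟨(i : ℕ) + 1, ht⟩ = 0 := by
        simp only [bvec, Sum.elim_inr, Pi.sub_apply, Ebox_mk]
        rw [if_neg (by omega), if_neg (by omega)]
        ring
      rw [hz, mul_zero]
    have hsum1 : ∑ i' : Fin (r - 1),
        g (Sum.inl i') * (bvec n r c (Sum.inl i') ⟨(i : ℕ) + 1, ht⟩) = g (Sum.inl i) := by
      rw [Finset.sum_eq_single i]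
      · simp only [bvec, Sum.elim_inl, Pi.sub_apply, Ebox_mk]
        rw [if_neg (show ¬((i : ℕ) + 1 = 0) by omega)]
        norm_num
      · intro i' _ hne
        have hv : (i' : ℕ) ≠ (i : ℕ) := fun hh => hne (Fin.ext hh)
        have hz : bvec n r c (Sum.inl i') ⟨(i : ℕ) + 1, ht⟩ = 0 := by
          simp only [bvec, Sum.elim_inl, Pi.sub_apply, Ebox_mk]
          rw [if_neg (by omega), if_neg (by omega)]
          ring
        rw [hz, mul_zero]
      · intro hmem; exact absurd (Finset.mem_univ i) hmem
    rw [hsum1, hsum2, add_zero] at h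
    exact h
  have gcol : ∀ j : Fin (c - 1), g (Sum.inr j) = 0 := by
    intro j
    have hj := j.isLt
    have ht : (n + (j : ℕ) + 1) < 2 * n := by omega
    have h := key ⟨n + (j : ℕ) + 1, ht⟩
    rw [Finset.sum_apply, Fintype.sum_sum_type] at h
    simp only [Pi.smul_apply, smul_eq_mul] at h
    have hsum1 : ∑ i' : Fin (r - 1),
        g (Sum.inl i') * (bvec n r c (Sum.inl i') ⟨n + (j : ℕ) + 1, ht⟩) = 0 := by
      apply Finset.sum_eq_zero
      intro i' _
      have hi' := i'.isLt
      have hz : bvec n r c (Sum.inl i') ⟨n + (j : ℕ) + 1, ht⟩ = 0 := by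
        simp only [bvec, Sum.elim_inl, Pi.sub_apply, Ebox_mk]
        rw [if_neg (by omega), if_neg (by omega)]
        ring
      rw [hz, mul_zero]
    have hsum2 : ∑ j' : Fin (c - 1),
        g (Sum.inr j') * (bvec n r c (Sum.inr j') ⟨n + (j : ℕ) + 1, ht⟩) = -g (Sum.inr j) := by
      rw [Finset.sum_eq_single j]
      · simp only [bvec, Sum.elim_inr, Pi.sub_apply, Ebox_mk]
        rw [if_neg (show ¬(n + (j : ℕ) + 1 = n) by omega)]
        norm_num
      · intro j' _ hne
        have hv : (j' : ℕ) ≠ (j : ℕ) := fun hh => hne (Fin.ext hh)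
        have hz : bvec n r c (Sum.inr j') ⟨n + (j : ℕ) + 1, ht⟩ = 0 := by
          simp only [bvec, Sum.elim_inr, Pi.sub_apply, Ebox_mk]
          rw [if_neg (by omega), if_neg (by omega)]
          ring
        rw [hz, mul_zero]
      · intro hmem; exact absurd (Finset.mem_univ j) hmem
    rw [hsum1, hsum2, zero_add] at h
    linarith
  intro k
  cases k with
  | inl i => exact grow i
  | inr j => exact gcol j

lemma finrank_aux {n r c : ℕ} (hr2 : 2 ≤ r) (hc2 : 2 ≤ c) (hrn : r ≤ n) (hcn : c ≤ n)
    (A : Set (ℕ × ℕ))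
    (hbox : ∀ p ∈ A, 1 ≤ p.1 ∧ p.1 ≤ r ∧ 1 ≤ p.2 ∧ p.2 ≤ c)
    (hrow : ∀ i, 1 ≤ i → i ≤ r → ((i : ℕ), (1 : ℕ)) ∈ A)
    (hcol : ∀ j, 1 ≤ j → j ≤ c → ((1 : ℕ), (j : ℕ)) ∈ A) :
    Module.finrank ℝ ↥(vectorSpan ℝ (convexHull ℝ (vtx n '' A))) = r + c - 2 := by
  have h11 : ((1 : ℕ), (1 : ℕ)) ∈ A := hrow 1 le_rfl (by omega)
  have e1 : vectorSpan ℝ (convexHull ℝ (vtx n '' A)) = vectorSpan ℝ (vtx n '' A) := by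
    rw [← direction_affineSpan, ← direction_affineSpan, affineSpan_convexHull]
  rw [e1, vectorSpan_eq_span_vsub_set_right ℝ (Set.mem_image_of_mem (vtx n) h11)]
  have hspan : Submodule.span ℝ ((· -ᵥ vtx n (1, 1)) '' (vtx n '' A)) =
      Submodule.span ℝ (Set.range (bvec n r c)) := by
    apply le_antisymm
    · rw [Submodule.span_le]
      rintro x ⟨y, ⟨p, hp, rfl⟩, rfl⟩
      obtain ⟨hp1, hp2, hp3, hp4⟩ := hbox p hp
      show (vtx n p -ᵥ vtx n (1, 1)) ∈ Submodule.span ℝ (Set.range (bvec n r c))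
      rw [vsub_eq_sub, vtx_split]
      apply Submodule.add_mem
      · rcases Nat.lt_or_ge p.1 2 with h | h
        · have : p.1 - 1 = 0 := by omega
          rw [this, sub_self]
          exact Submodule.zero_mem _
        · have he : p.1 - 1 = (p.1 - 2) + 1 := by omega
          rw [he]
          exact Submodule.subset_span ⟨Sum.inl ⟨p.1 - 2, by omega⟩, rfl⟩
      · rcases Nat.lt_or_ge p.2 2 with h | h
        · have : n + p.2 - 1 = n := by omega
          rw [this, sub_self]
          exact Submodule.zero_mem _
        · have he : n + p.2 - 1 = n + (p.2 - 2) + 1 := by omega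
          rw [he]
          exact Submodule.subset_span ⟨Sum.inr ⟨p.2 - 2, by omega⟩, rfl⟩
    · rw [Submodule.span_le]
      rintro x ⟨k, rfl⟩
      apply Submodule.subset_span
      cases k with
      | inl i =>
        have hi := i.isLt
        refine ⟨vtx n ((i : ℕ) + 2, 1),
          Set.mem_image_of_mem _ (hrow ((i : ℕ) + 2) (by omega) (by omega)), ?_⟩
        show vtx n ((i : ℕ) + 2, 1) -ᵥ vtx n (1, 1) = bvec n r c (Sum.inl i)
        rw [vsub_eq_sub, vtx_split]
        have e2 : ((((i : ℕ) + 2, (1 : ℕ)) : ℕ × ℕ)).1 - 1 = (i : ℕ) + 1 := by simp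
        have e3 : n + ((((i : ℕ) + 2, (1 : ℕ)) : ℕ × ℕ)).2 - 1 = n := by simp
        rw [e2, e3, sub_self, add_zero]
        rfl
      | inr j =>
        have hj := j.isLt
        refine ⟨vtx n (1, (j : ℕ) + 2),
          Set.mem_image_of_mem _ (hcol ((j : ℕ) + 2) (by omega) (by omega)), ?_⟩
        show vtx n (1, (j : ℕ) + 2) -ᵥ vtx n (1, 1) = bvec n r c (Sum.inr j)
        rw [vsub_eq_sub, vtx_split]
        have e2 : ((((1 : ℕ), (j : ℕ) + 2) : ℕ × ℕ)).1 - 1 = 0 := by simp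
        have e3 : n + ((((1 : ℕ), (j : ℕ) + 2) : ℕ × ℕ)).2 - 1 = n + (j : ℕ) + 1 := by simp; omega
        rw [e2, e3, sub_self, zero_add]
        rfl
  rw [hspan, finrank_span_eq_card (bvec_li hr2 hc2 hrn hcn)]
  simp only [Fintype.card_sum, Fintype.card_fin]
  omega

theorem stmt14 (n : ℕ) (hn : 1 ≤ n) (π : Equiv.Perm ℕ) (hπ : IsPermOn n π)
    (ℓ : ℕ) (lam : ℕ → ℕ) (hdom : DominantOne π ℓ lam)
    (r c : ℕ) (hocc : Occupies (Lset π) r c) :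
    Lset π = NWset π ∧
    compCount (Lset π) = 1 ∧
    Module.finrank ℝ ↥(vectorSpan ℝ (convexHull ℝ (vtx n '' Lset π))) = r + c - 2 := by
  obtain ⟨hπ1, hℓ1, hmono, hpos, hRD⟩ := hdom
  have hl1 : 1 ≤ lam 1 := hpos 1 le_rfl hℓ1
  have h22 : (((2 : ℕ), (2 : ℕ)) : ℕ × ℕ) ∈ RD π := by
    rw [hRD]; exact ⟨1, 1, le_rfl, hℓ1, le_rfl, hl1, rfl⟩
  have hL1 : (((ℓ + 1 : ℕ), (2 : ℕ)) : ℕ × ℕ) ∈ RD π := by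
    rw [hRD]; exact ⟨ℓ, 1, hℓ1, le_rfl, le_rfl, hpos ℓ hℓ1 le_rfl, rfl⟩
  have hT : (((2 : ℕ), (lam 1 + 1 : ℕ)) : ℕ × ℕ) ∈ RD π := by
    rw [hRD]; exact ⟨1, lam 1, le_rfl, hℓ1, hl1, le_rfl, rfl⟩
  have hbd : ∀ q ∈ RD π, q.1 ≤ ℓ + 1 ∧ q.2 ≤ lam 1 + 1 := by
    rw [hRD]
    rintro q ⟨i, j, hi1, hiℓ, hj1, hjl, rfl⟩
    have := hmono 1 i le_rfl hi1 hiℓ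
    exact ⟨by omega, by omega⟩
  have h11RD : (((1 : ℕ), (1 : ℕ)) : ℕ × ℕ) ∉ RD π := by
    rw [hRD]
    rintro ⟨i, j, hi1, _, _, _, h⟩
    have h1 : (1 : ℕ) = i + 1 := congrArg Prod.fst h
    omega
  have hdome : domPiece π = ∅ := by
    ext q
    simp only [domPiece, Set.mem_setOf_eq, Set.mem_empty_iff_false, iff_false, not_and]
    intro h
    exact absurd h h11RD
  have hLNW : Lset π = NWset π := by rw [Lset, hdome, Set.diff_empty]
  have hclose : ∀ p ∈ NWset π, ∀ a b : ℕ, 1 ≤ a → a ≤ p.1 → 1 ≤ b → b ≤ p.2 →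
      (((a : ℕ), (b : ℕ)) : ℕ × ℕ) ∈ NWset π := by
    rintro p ⟨_, _, q, hq, hq1, hq2⟩ a b ha1 ha2 hb1 hb2
    exact ⟨ha1, hb1, q, hq, by omega, by omega⟩
  have h11L : (((1 : ℕ), (1 : ℕ)) : ℕ × ℕ) ∈ Lset π := by
    rw [hLNW]
    exact ⟨le_rfl, le_rfl, (2, 2), h22, by omega, by omega⟩
  have hclL : ∀ p ∈ Lset π, ((p.1, (1 : ℕ)) : ℕ × ℕ) ∈ Lset π := by
    intro p hp
    rw [hLNW] at hp ⊢
    exact hclose p hp p.1 1 hp.1 le_rfl le_rfl hp.2.1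
  have hr : r = ℓ + 1 := by
    have h1 : (((ℓ + 1 : ℕ), (1 : ℕ)) : ℕ × ℕ) ∈ Lset π := by
      rw [hLNW]
      exact ⟨by omega, le_rfl, (ℓ + 1, 2), hL1, le_rfl, by omega⟩
    have h2 : ℓ + 1 ≤ r := (hocc.1 _ h1).2.1
    have hr1 : 1 ≤ r := le_trans (hocc.1 _ h11L).1 (hocc.1 _ h11L).2.1
    obtain ⟨j, hj⟩ := hocc.2.1 r hr1 le_rfl
    rw [hLNW] at hj
    obtain ⟨_, _, q, hq, hle, _⟩ := hj
    have := (hbd q hq).1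
    have hle' : r ≤ q.1 := hle
    omega
  have hc : c = lam 1 + 1 := by
    have h1 : (((1 : ℕ), (lam 1 + 1 : ℕ)) : ℕ × ℕ) ∈ Lset π := by
      rw [hLNW]
      exact ⟨le_rfl, by omega, (2, lam 1 + 1), hT, by omega, le_rfl⟩
    have h2 : lam 1 + 1 ≤ c := (hocc.1 _ h1).2.2.2
    have hc1 : 1 ≤ c := le_trans (hocc.1 _ h11L).2.2.1 (hocc.1 _ h11L).2.2.2
    obtain ⟨i, hi⟩ := hocc.2.2 c hc1 le_rfl
    rw [hLNW] at hi
    obtain ⟨_, _, q, hq, _, hle⟩ := hi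
    have := (hbd q hq).2
    have hle' : c ≤ q.2 := hle
    omega
  have hrn : r ≤ n := by
    have h : ℓ + 1 ≤ n := (RD_bounds hπ hL1).2.1
    omega
  have hcn : c ≤ n := by
    have h : lam 1 + 1 < n := (RD_bounds hπ hT).2.2.2
    omega
  have hrow : ∀ i, 1 ≤ i → i ≤ r → (((i : ℕ), (1 : ℕ)) : ℕ × ℕ) ∈ Lset π := by
    intro i h1 h2
    obtain ⟨j, hj⟩ := hocc.2.1 i h1 h2
    exact hclL _ hj
  have hcol : ∀ j, 1 ≤ j → j ≤ c → (((1 : ℕ), (j : ℕ)) : ℕ × ℕ) ∈ Lset π := by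
    intro j h1 h2
    obtain ⟨i, hi⟩ := hocc.2.2 j h1 h2
    rw [hLNW] at hi ⊢
    exact hclose _ hi 1 j le_rfl hi.1 h1 le_rfl
  exact ⟨hLNW, compCount_eq_one h11L hclL,
    finrank_aux (by omega) (by omega) hrn hcn (Lset π) hocc.1 hrow hcol⟩
end
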